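/- Let 𝔄 and 𝔅 be weakly Connes amenable dual Banach algebras such that the linear span of {a₁a₂ : a₁, a₂ ∈ 𝔄} is w*-dense in 𝔄 and the linear span of {b₁b₂ : b₁, b₂ ∈ 𝔅} is w*-dense in 𝔅. Then the ℓ¹-direct sum 𝔄 ⊕¹ 𝔅 is weakly Connes amenable. -/

import Mathlib

noncomputable section

open Filter Topology

universe u

/-- The locally convex topology on `A` induced by a pairing `p : A → X → ℂ`,
i.e. the initial topology for the family of maps `a ↦ p a x`, `x : X`. -/
def topOfPairing {A X : Type*} (p : A → X → ℂ) : TopologicalSpace A :=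
  TopologicalSpace.induced p Pi.topologicalSpace

theorem continuous_topOfPairing_iff {B A X : Type*} {tB : TopologicalSpace B}
    {p : A → X → ℂ} {f : B → A} :
    Continuous[tB, topOfPairing p] f ↔
      ∀ x, Continuous[tB, inferInstance] fun b => p (f b) x := by
  rw [topOfPairing, continuous_induced_rng, continuous_pi_iff]
  exact Iff.rfl

theorem topOfPairing_eval_cont {A X : Type*} (p : A → X → ℂ) (x : X) :
    Continuous[topOfPairing p, inferInstance] fun a => p a x :=
  continuous_topOfPairing_iff.1 (@continuous_id _ (topOfPairing p)) x

/-- The weak topology `σ(E, E*)` on a normed space `E`. -/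
def weakTop (E : Type u) [NormedAddCommGroup E] [NormedSpace ℂ E] : TopologicalSpace E :=
  topOfPairing fun x (φ : E →L[ℂ] ℂ) => φ x

/-- The weak-* topology `σ(E*, E)` on the dual of a normed space `E`. -/
def wstarD (E : Type u) [NormedAddCommGroup E] [NormedSpace ℂ E] :
    TopologicalSpace (E →L[ℂ] ℂ) :=
  topOfPairing fun Λ (x : E) => Λ x

section Core

variable {A X : Type u} [NormedAddCommGroup A] [NormedSpace ℂ A]
  [NormedAddCommGroup X] [NormedSpace ℂ X]

/-- The weak-* topology `σ(A, X)` on a dual Banach space `A`, where the duality with the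
predual `X` is implemented by an isometric linear isomorphism `ρ : A ≅ X*`. -/
def wstar (ρ : A ≃ₗᵢ[ℂ] (X →L[ℂ] ℂ)) : TopologicalSpace A :=
  topOfPairing fun a (x : X) => ρ a x

theorem weakTop_cont_iff {B : Type*} {tB : TopologicalSpace B} {E : Type u}
    [NormedAddCommGroup E] [NormedSpace ℂ E] {f : B → E} :
    Continuous[tB, weakTop E] f ↔
      ∀ φ : E →L[ℂ] ℂ, Continuous[tB, inferInstance] fun b => φ (f b) :=
  continuous_topOfPairing_iff

namespace WeakCont

variable {B : Type*} {E F : Type u} [NormedAddCommGroup E] [NormedSpace ℂ E]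
  [NormedAddCommGroup F] [NormedSpace ℂ F]

theorem clm_comp (tB : TopologicalSpace B) (L : E →L[ℂ] F) {f : B → E}
    (hf : Continuous[tB, weakTop E] f) : Continuous[tB, weakTop F] fun b => L (f b) :=
  weakTop_cont_iff.2 fun φ => weakTop_cont_iff.1 hf (φ.comp L)

theorem add (tB : TopologicalSpace B) {f g : B → E} (hf : Continuous[tB, weakTop E] f)
    (hg : Continuous[tB, weakTop E] g) : Continuous[tB, weakTop E] fun b => f b + g b := by
  refine weakTop_cont_iff.2 fun φ => ?_
  letI := tB
  have h := (weakTop_cont_iff.1 hf φ).add (weakTop_cont_iff.1 hg φ)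
  convert h using 1; funext b; simp

theorem const_smul (tB : TopologicalSpace B) {f : B → E} (hf : Continuous[tB, weakTop E] f)
    (c : ℂ) : Continuous[tB, weakTop E] fun b => c • f b := by
  refine weakTop_cont_iff.2 fun φ => ?_
  letI := tB
  have h := (weakTop_cont_iff.1 hf φ).const_smul c
  convert h using 1; funext b; simp

theorem zero (tB : TopologicalSpace B) :
    Continuous[tB, weakTop E] fun _ : B => (0 : E) := by
  refine weakTop_cont_iff.2 fun φ => ?_
  letI := tB
  simpa using (continuous_const : Continuous fun _ : B => (0 : ℂ))

end WeakCont

/-- A Banach algebra structure on a normed space `A`: an associative continuous bilinear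
multiplication satisfying `‖a * b‖ ≤ ‖a‖ * ‖b‖`. -/
structure BanachAlgStr (A : Type u) [NormedAddCommGroup A] [NormedSpace ℂ A] where
  mul : A →L[ℂ] A →L[ℂ] A
  mul_assoc : ∀ a b c, mul (mul a b) c = mul a (mul b c)
  norm_mul_le : ∀ a b, ‖mul a b‖ ≤ ‖a‖ * ‖b‖

/-- `A`, with predual `X` (via `ρ`) and multiplication `S`, is a dual Banach algebra:
the multiplication is separately continuous for the weak-* topology `σ(A, X)`. -/
structure IsDualBanachAlgebra (ρ : A ≃ₗᵢ[ℂ] (X →L[ℂ] ℂ)) (S : BanachAlgStr A) : Prop where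
  mul_left : ∀ a, Continuous[wstar ρ, wstar ρ] fun b => S.mul a b
  mul_right : ∀ a, Continuous[wstar ρ, wstar ρ] fun b => S.mul b a

/-- A Banach `A`-bimodule structure (for the Banach algebra `(A, S)`) on a normed space `E`:
continuous bilinear left and right actions `l`, `r` which commute and are associative
for the multiplication `S.mul`. -/
structure BanachBimodule {A : Type u} [NormedAddCommGroup A] [NormedSpace ℂ A]
    (S : BanachAlgStr A) (E : Type u) [NormedAddCommGroup E] [NormedSpace ℂ E] where
  l : A →L[ℂ] E →L[ℂ] E
  r : A →L[ℂ] E →L[ℂ] E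
  l_mul : ∀ a b x, l (S.mul a b) x = l a (l b x)
  r_mul : ∀ a b x, r (S.mul a b) x = r b (r a x)
  lr_comm : ∀ a b x, l a (r b x) = r b (l a x)

/-- `A` as a Banach bimodule over itself, via multiplication. -/
def BanachAlgStr.toBimodule (S : BanachAlgStr A) : BanachBimodule S A where
  l := S.mul
  r := S.mul.flip
  l_mul := fun a b x => S.mul_assoc a b x
  r_mul := fun a b x => (S.mul_assoc x a b).symm
  lr_comm := fun a b x => (S.mul_assoc a x b).symm

variable {E : Type u} [NormedAddCommGroup E] [NormedSpace ℂ E]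

/-- `σwc(E)`: the set of `x ∈ E` such that the maps `a ↦ a · x` and `a ↦ x · a` are
continuous from the weak-* topology on `A` into the weak topology on `E`.
It is a (closed) linear subspace of `E`. -/
def sigmaWC (ρ : A ≃ₗᵢ[ℂ] (X →L[ℂ] ℂ)) {S : BanachAlgStr A} (M : BanachBimodule S E) :
    Submodule ℂ E where
  carrier := {x | Continuous[wstar ρ, weakTop E] (fun a => M.l a x) ∧
    Continuous[wstar ρ, weakTop E] fun a => M.r a x}
  add_mem' := by
    rintro x y ⟨h1, h2⟩ ⟨h3, h4⟩
    constructor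
    · simp only [map_add]
      exact WeakCont.add _ h1 h3
    · simp only [map_add]
      exact WeakCont.add _ h2 h4
  zero_mem' := by
    constructor
    · simp only [map_zero]
      exact WeakCont.zero _
    · simp only [map_zero]
      exact WeakCont.zero _
  smul_mem' := by
    rintro c x ⟨h1, h2⟩
    constructor
    · simp only [map_smul]
      exact WeakCont.const_smul _ h1 c
    · simp only [map_smul]
      exact WeakCont.const_smul _ h2 c

theorem smulL_mem_sigmaWC {ρ : A ≃ₗᵢ[ℂ] (X →L[ℂ] ℂ)} {S : BanachAlgStr A}
    {M : BanachBimodule S E} (hA : IsDualBanachAlgebra ρ S) {x : E}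
    (hx : x ∈ sigmaWC ρ M) (a : A) : M.l a x ∈ sigmaWC ρ M := by
  obtain ⟨h1, h2⟩ := hx
  constructor
  · have he : (fun c => M.l c (M.l a x)) = fun c => M.l (S.mul c a) x :=
      funext fun c => (M.l_mul c a x).symm
    rw [he]
    exact @Continuous.comp A A E (wstar ρ) (wstar ρ) (weakTop E) _ _ h1 (hA.mul_right a)
  · have he : (fun c => M.r c (M.l a x)) = fun c => M.l a (M.r c x) :=
      funext fun c => (M.lr_comm a c x).symm
    rw [he]
    exact WeakCont.clm_comp _ (M.l a) h2

theorem smulR_mem_sigmaWC {ρ : A ≃ₗᵢ[ℂ] (X →L[ℂ] ℂ)} {S : BanachAlgStr A}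
    {M : BanachBimodule S E} (hA : IsDualBanachAlgebra ρ S) {x : E}
    (hx : x ∈ sigmaWC ρ M) (a : A) : M.r a x ∈ sigmaWC ρ M := by
  obtain ⟨h1, h2⟩ := hx
  constructor
  · have he : (fun c => M.l c (M.r a x)) = fun c => M.r a (M.l c x) :=
      funext fun c => M.lr_comm c a x
    rw [he]
    exact WeakCont.clm_comp _ (M.r a) h1
  · have he : (fun c => M.r c (M.r a x)) = fun c => M.r (S.mul a c) x :=
      funext fun c => (M.r_mul a c x).symm
    rw [he]
    exact @Continuous.comp A A E (wstar ρ) (wstar ρ) (weakTop E) _ _ h2 (hA.mul_left a)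

/-- `j_E : E* → σwc(E)*`, restriction of functionals (the adjoint of the inclusion
`σwc(E) ↪ E`). -/
def jmap (ρ : A ≃ₗᵢ[ℂ] (X →L[ℂ] ℂ)) {S : BanachAlgStr A} (M : BanachBimodule S E)
    (φ : E →L[ℂ] ℂ) : ↥(sigmaWC ρ M) →L[ℂ] ℂ :=
  φ.comp (sigmaWC ρ M).subtypeL

/-- The left dual action of `A` on `σwc(E)*`: `(a · Λ)(x) = Λ(x · a)`. -/
def dualL {ρ : A ≃ₗᵢ[ℂ] (X →L[ℂ] ℂ)} {S : BanachAlgStr A} {M : BanachBimodule S E}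
    (hA : IsDualBanachAlgebra ρ S) (a : A) (Λ : ↥(sigmaWC ρ M) →L[ℂ] ℂ) :
    ↥(sigmaWC ρ M) →L[ℂ] ℂ :=
  Λ.comp (ContinuousLinearMap.codRestrict ((M.r a).comp (sigmaWC ρ M).subtypeL)
    (sigmaWC ρ M) fun x => smulR_mem_sigmaWC hA x.2 a)

/-- The right dual action of `A` on `σwc(E)*`: `(Λ · a)(x) = Λ(a · x)`. -/
def dualR {ρ : A ≃ₗᵢ[ℂ] (X →L[ℂ] ℂ)} {S : BanachAlgStr A} {M : BanachBimodule S E}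
    (hA : IsDualBanachAlgebra ρ S) (a : A) (Λ : ↥(sigmaWC ρ M) →L[ℂ] ℂ) :
    ↥(sigmaWC ρ M) →L[ℂ] ℂ :=
  Λ.comp (ContinuousLinearMap.codRestrict ((M.l a).comp (sigmaWC ρ M).subtypeL)
    (sigmaWC ρ M) fun x => smulL_mem_sigmaWC hA x.2 a)

/-- `D : A → E*` is a derivation for the dual bimodule actions of `A` on `E*`,
i.e. `D(ab) = a · D(b) + D(a) · b`, where `(a · φ)(x) = φ(x · a)` and
`(φ · a)(x) = φ(a · x)`. -/
def IsDerivationToDual (S : BanachAlgStr A) (M : BanachBimodule S E)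
    (D : A →L[ℂ] (E →L[ℂ] ℂ)) : Prop :=
  ∀ a b, D (S.mul a b) = (D b).comp (M.r a) + (D a).comp (M.l b)

/-- `D : A → E` is a derivation for the bimodule actions of `A` on `E`:
`D(ab) = a · D(b) + D(a) · b`. -/
def IsDerivationInto (S : BanachAlgStr A) (M : BanachBimodule S E)
    (D : A →L[ℂ] E) : Prop :=
  ∀ a b, D (S.mul a b) = M.l a (D b) + M.r b (D a)

/-- The dual Banach algebra `(A, ρ, S)` is weakly Connes amenable: for every derivation
`D : A → A*` such that `j_A ∘ D : A → σwc(A)*` is weak-*–weak-* continuous, the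
derivation `j_A ∘ D` is inner, i.e. of the form `a ↦ a · Φ - Φ · a` for some
`Φ ∈ σwc(A)*`. -/
def WeaklyConnesAmenable (ρ : A ≃ₗᵢ[ℂ] (X →L[ℂ] ℂ)) (S : BanachAlgStr A)
    (hA : IsDualBanachAlgebra ρ S) : Prop :=
  ∀ D : A →L[ℂ] (A →L[ℂ] ℂ), IsDerivationToDual S S.toBimodule D →
    Continuous[wstar ρ, wstarD ↥(sigmaWC ρ S.toBimodule)]
      (fun a => jmap ρ S.toBimodule (D a)) →
    ∃ Φ, ∀ a, jmap ρ S.toBimodule (D a) = dualL hA a Φ - dualR hA a Φ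

end Core

section Prod1

variable {A X B Y : Type u} [NormedAddCommGroup A] [NormedSpace ℂ A]
  [NormedAddCommGroup X] [NormedSpace ℂ X] [NormedAddCommGroup B] [NormedSpace ℂ B]
  [NormedAddCommGroup Y] [NormedSpace ℂ Y]

/-- The canonical (linear homeomorphic) identification of the ℓ¹-direct sum `A ⊕¹ B`
(realized as `WithLp 1 (A × B)`, with norm `‖(a,b)‖ = ‖a‖ + ‖b‖`) with the product. -/
def prodL1 (A B : Type u) [NormedAddCommGroup A] [NormedSpace ℂ A]
    [NormedAddCommGroup B] [NormedSpace ℂ B] : WithLp 1 (A × B) ≃L[ℂ] A × B :=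
  WithLp.prodContinuousLinearEquiv 1 ℂ A B

/-- The natural injective homomorphism `ι_A : A → A ⊕¹ B`, `a ↦ (a, 0)`. -/
def iotaA (A B : Type u) [NormedAddCommGroup A] [NormedSpace ℂ A]
    [NormedAddCommGroup B] [NormedSpace ℂ B] : A →L[ℂ] WithLp 1 (A × B) :=
  ((prodL1 A B).symm : A × B →L[ℂ] WithLp 1 (A × B)).comp (ContinuousLinearMap.inl ℂ A B)

/-- The natural injective homomorphism `ι_B : B → A ⊕¹ B`, `b ↦ (0, b)`. -/
def iotaB (A B : Type u) [NormedAddCommGroup A] [NormedSpace ℂ A]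
    [NormedAddCommGroup B] [NormedSpace ℂ B] : B →L[ℂ] WithLp 1 (A × B) :=
  ((prodL1 A B).symm : A × B →L[ℂ] WithLp 1 (A × B)).comp (ContinuousLinearMap.inr ℂ A B)

variable (ρA : A ≃ₗᵢ[ℂ] (X →L[ℂ] ℂ)) (ρB : B ≃ₗᵢ[ℂ] (Y →L[ℂ] ℂ))
  (SA : BanachAlgStr A) (SB : BanachAlgStr B)
  (ρP : WithLp 1 (A × B) ≃ₗᵢ[ℂ] ((X × Y) →L[ℂ] ℂ))
  (SP : BanachAlgStr (WithLp 1 (A × B)))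

theorem prodL1_iotaA (z : A) : prodL1 A B (iotaA A B z) = (z, 0) := by
  simp [iotaA]

theorem prodL1_iotaB (z : B) : prodL1 A B (iotaB A B z) = (0, z) := by
  simp [iotaB]

theorem fst_wstar_cont
    (hρP : ∀ u q, ρP u q = ρA (prodL1 A B u).1 q.1 + ρB (prodL1 A B u).2 q.2) :
    Continuous[wstar ρP, wstar ρA] fun u => (prodL1 A B u).1 := by
  refine continuous_topOfPairing_iff.2 fun x => ?_
  have he : (fun u => ρA (prodL1 A B u).1 x) = fun u => ρP u (x, 0) := by
    funext u; rw [hρP]; simp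
  rw [he]
  exact topOfPairing_eval_cont _ _

theorem snd_wstar_cont
    (hρP : ∀ u q, ρP u q = ρA (prodL1 A B u).1 q.1 + ρB (prodL1 A B u).2 q.2) :
    Continuous[wstar ρP, wstar ρB] fun u => (prodL1 A B u).2 := by
  refine continuous_topOfPairing_iff.2 fun y => ?_
  have he : (fun u => ρB (prodL1 A B u).2 y) = fun u => ρP u (0, y) := by
    funext u; rw [hρP]; simp
  rw [he]
  exact topOfPairing_eval_cont _ _

theorem iotaA_mem_sigmaWC
    (hρP : ∀ u q, ρP u q = ρA (prodL1 A B u).1 q.1 + ρB (prodL1 A B u).2 q.2)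
    (hSP : ∀ u v, prodL1 A B (SP.mul u v) =
      (SA.mul (prodL1 A B u).1 (prodL1 A B v).1, SB.mul (prodL1 A B u).2 (prodL1 A B v).2))
    {x : A} (hx : x ∈ sigmaWC ρA SA.toBimodule) :
    iotaA A B x ∈ sigmaWC ρP SP.toBimodule := by
  obtain ⟨h1, h2⟩ := hx
  have hfst := fst_wstar_cont ρA ρB ρP hρP
  constructor
  · have he : (fun c => SP.toBimodule.l c (iotaA A B x)) =
        fun c => iotaA A B (SA.mul (prodL1 A B c).1 x) := by
      funext c
      apply (prodL1 A B).injective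
      show prodL1 A B (SP.mul c (iotaA A B x)) = _
      rw [hSP, prodL1_iotaA, prodL1_iotaA]
      simp
    rw [he]
    exact WeakCont.clm_comp _ (iotaA A B)
      (@Continuous.comp _ _ _ (wstar ρP) (wstar ρA) (weakTop A) _ _ h1 hfst)
  · have he : (fun c => SP.toBimodule.r c (iotaA A B x)) =
        fun c => iotaA A B (SA.mul x (prodL1 A B c).1) := by
      funext c
      apply (prodL1 A B).injective
      show prodL1 A B (SP.mul (iotaA A B x) c) = _
      rw [hSP, prodL1_iotaA, prodL1_iotaA]
      simp
    rw [he]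
    exact WeakCont.clm_comp _ (iotaA A B)
      (@Continuous.comp _ _ _ (wstar ρP) (wstar ρA) (weakTop A) _ _ h2 hfst)

theorem iotaB_mem_sigmaWC
    (hρP : ∀ u q, ρP u q = ρA (prodL1 A B u).1 q.1 + ρB (prodL1 A B u).2 q.2)
    (hSP : ∀ u v, prodL1 A B (SP.mul u v) =
      (SA.mul (prodL1 A B u).1 (prodL1 A B v).1, SB.mul (prodL1 A B u).2 (prodL1 A B v).2))
    {y : B} (hy : y ∈ sigmaWC ρB SB.toBimodule) :
    iotaB A B y ∈ sigmaWC ρP SP.toBimodule := by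
  obtain ⟨h1, h2⟩ := hy
  have hsnd := snd_wstar_cont ρA ρB ρP hρP
  constructor
  · have he : (fun c => SP.toBimodule.l c (iotaB A B y)) =
        fun c => iotaB A B (SB.mul (prodL1 A B c).2 y) := by
      funext c
      apply (prodL1 A B).injective
      show prodL1 A B (SP.mul c (iotaB A B y)) = _
      rw [hSP, prodL1_iotaB, prodL1_iotaB]
      simp
    rw [he]
    exact WeakCont.clm_comp _ (iotaB A B)
      (@Continuous.comp _ _ _ (wstar ρP) (wstar ρB) (weakTop B) _ _ h1 hsnd)
  · have he : (fun c => SP.toBimodule.r c (iotaB A B y)) =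
        fun c => iotaB A B (SB.mul y (prodL1 A B c).2) := by
      funext c
      apply (prodL1 A B).injective
      show prodL1 A B (SP.mul (iotaB A B y) c) = _
      rw [hSP, prodL1_iotaB, prodL1_iotaB]
      simp
    rw [he]
    exact WeakCont.clm_comp _ (iotaB A B)
      (@Continuous.comp _ _ _ (wstar ρP) (wstar ρB) (weakTop B) _ _ h2 hsnd)

/-- `ν_A : σwc(A ⊕¹ B)* → σwc(A)*`, the adjoint of the natural embedding
`σwc(A) → σwc(A ⊕¹ B)`, `a ↦ (a, 0)`. -/
def nuA
    (hρP : ∀ u q, ρP u q = ρA (prodL1 A B u).1 q.1 + ρB (prodL1 A B u).2 q.2)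
    (hSP : ∀ u v, prodL1 A B (SP.mul u v) =
      (SA.mul (prodL1 A B u).1 (prodL1 A B v).1, SB.mul (prodL1 A B u).2 (prodL1 A B v).2))
    (Λ : ↥(sigmaWC ρP SP.toBimodule) →L[ℂ] ℂ) : ↥(sigmaWC ρA SA.toBimodule) →L[ℂ] ℂ :=
  Λ.comp (ContinuousLinearMap.codRestrict
    ((iotaA A B).comp (sigmaWC ρA SA.toBimodule).subtypeL) _
    fun z => iotaA_mem_sigmaWC ρA ρB SA SB ρP SP hρP hSP z.2)

/-- `ν_B : σwc(A ⊕¹ B)* → σwc(B)*`, the adjoint of the natural embedding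
`σwc(B) → σwc(A ⊕¹ B)`, `b ↦ (0, b)`. -/
def nuB
    (hρP : ∀ u q, ρP u q = ρA (prodL1 A B u).1 q.1 + ρB (prodL1 A B u).2 q.2)
    (hSP : ∀ u v, prodL1 A B (SP.mul u v) =
      (SA.mul (prodL1 A B u).1 (prodL1 A B v).1, SB.mul (prodL1 A B u).2 (prodL1 A B v).2))
    (Λ : ↥(sigmaWC ρP SP.toBimodule) →L[ℂ] ℂ) : ↥(sigmaWC ρB SB.toBimodule) →L[ℂ] ℂ :=
  Λ.comp (ContinuousLinearMap.codRestrict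
    ((iotaB A B).comp (sigmaWC ρB SB.toBimodule).subtypeL) _
    fun z => iotaB_mem_sigmaWC ρA ρB SA SB ρP SP hρP hSP z.2)

end Prod1

/-!
A derivation `D : A ⊕¹ B → (A ⊕¹ B)*` restricts along `a ↦ (a, 0)` and `b ↦ (0, b)` to
derivations `A → A*` and `B → B*`, whose compositions with `j` are implemented by some
`Φ_A ∈ σwc(A)*`, `Φ_B ∈ σwc(B)*`. The mixed terms `D (a, 0) (0, y)` vanish on products
`a = a₁ a₂` because `A · B = B · A = 0`, hence everywhere by w*-density of the products. So
`j ∘ D` is implemented by `Φ_A ∘ π_A + Φ_B ∘ π_B`, where the coordinate projections `π_A`, `π_B`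
map `σwc(A ⊕¹ B)` into `σwc(A)` and `σwc(B)`.
-/

section Pullback

variable {A X P Z : Type u} [NormedAddCommGroup A] [NormedSpace ℂ A]
  [NormedAddCommGroup X] [NormedSpace ℂ X] [NormedAddCommGroup P] [NormedSpace ℂ P]
  [NormedAddCommGroup Z] [NormedSpace ℂ Z]
  {ρA : A ≃ₗᵢ[ℂ] (X →L[ℂ] ℂ)} {ρP : P ≃ₗᵢ[ℂ] (Z →L[ℂ] ℂ)}
  {SA : BanachAlgStr A} {SP : BanachAlgStr P}

theorem continuous_apply_of_mem_sigmaWC {D : P →L[ℂ] (P →L[ℂ] ℂ)}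
    (hDc : Continuous[wstar ρP, wstarD ↥(sigmaWC ρP SP.toBimodule)]
      fun u => jmap ρP SP.toBimodule (D u))
    {z : P} (hz : z ∈ sigmaWC ρP SP.toBimodule) :
    Continuous[wstar ρP, inferInstance] fun u => D u z :=
  continuous_topOfPairing_iff.1 hDc ⟨z, hz⟩

theorem mem_sigmaWC_of_leftInverse {ι : A →L[ℂ] P} (hιc : Continuous[wstar ρA, wstar ρP] ι)
    {π : P →L[ℂ] A} (hπ : ∀ u v, π (SP.mul u v) = SA.mul (π u) (π v))
    (hπι : ∀ a, π (ι a) = a) {z : P} (hz : z ∈ sigmaWC ρP SP.toBimodule) :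
    π z ∈ sigmaWC ρA SA.toBimodule := by
  obtain ⟨hl, hr⟩ := hz
  constructor
  · convert WeakCont.clm_comp _ π
      (@Continuous.comp _ _ _ (wstar ρA) (wstar ρP) (weakTop P) _ _ hl hιc) using 2 with a
    simp [BanachAlgStr.toBimodule, hπ, hπι]
  · convert WeakCont.clm_comp _ π
      (@Continuous.comp _ _ _ (wstar ρA) (wstar ρP) (weakTop P) _ _ hr hιc) using 2 with a
    simp [BanachAlgStr.toBimodule, hπ, hπι]

def derivPullback (ι : A →L[ℂ] P) (D : P →L[ℂ] (P →L[ℂ] ℂ)) : A →L[ℂ] (A →L[ℂ] ℂ) :=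
  (((ContinuousLinearMap.compL ℂ A P ℂ).flip ι).comp D).comp ι

theorem IsDerivationToDual.pullback {ι : A →L[ℂ] P}
    (hι : ∀ a b, ι (SA.mul a b) = SP.mul (ι a) (ι b)) {D : P →L[ℂ] (P →L[ℂ] ℂ)}
    (hD : IsDerivationToDual SP SP.toBimodule D) :
    IsDerivationToDual SA SA.toBimodule (derivPullback ι D) := by
  intro a b
  ext c
  show D (ι (SA.mul a b)) (ι c) = D (ι b) (ι (SA.mul c a)) + D (ι a) (ι (SA.mul b c))
  rw [hι, hι, hι]
  exact congrArg (fun φ => φ (ι c)) (hD (ι a) (ι b))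

theorem continuous_jmap_derivPullback {ι : A →L[ℂ] P} (hιc : Continuous[wstar ρA, wstar ρP] ι)
    (hισ : ∀ x ∈ sigmaWC ρA SA.toBimodule, ι x ∈ sigmaWC ρP SP.toBimodule)
    {D : P →L[ℂ] (P →L[ℂ] ℂ)}
    (hDc : Continuous[wstar ρP, wstarD ↥(sigmaWC ρP SP.toBimodule)]
      fun u => jmap ρP SP.toBimodule (D u)) :
    Continuous[wstar ρA, wstarD ↥(sigmaWC ρA SA.toBimodule)]
      fun a => jmap ρA SA.toBimodule (derivPullback ι D a) :=
  continuous_topOfPairing_iff.2 fun x =>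
    @Continuous.comp _ _ _ (wstar ρA) (wstar ρP) _ _ _
      (continuous_apply_of_mem_sigmaWC hDc (hισ x x.2)) hιc

theorem IsDerivationToDual.apply_eq_zero_of_mul_eq_zero {D : P →L[ℂ] (P →L[ℂ] ℂ)}
    (hD : IsDerivationToDual SP SP.toBimodule D)
    (hDc : Continuous[wstar ρP, wstarD ↥(sigmaWC ρP SP.toBimodule)]
      fun u => jmap ρP SP.toBimodule (D u))
    {ι : A →L[ℂ] P} (hι : ∀ a b, ι (SA.mul a b) = SP.mul (ι a) (ι b))
    (hιc : Continuous[wstar ρA, wstar ρP] ι)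
    (hdense : @Dense A (wstar ρA)
      (Submodule.span ℂ {x : A | ∃ a₁ a₂, x = SA.mul a₁ a₂} : Set A))
    {z : P} (hz : z ∈ sigmaWC ρP SP.toBimodule) (hιz : ∀ a, SP.mul (ι a) z = 0)
    (hzι : ∀ a, SP.mul z (ι a) = 0) (a : A) :
    D (ι a) z = 0 := by
  let f : A →L[ℂ] ℂ := (D.flip z).comp ι
  have hspan : Submodule.span ℂ {x : A | ∃ a₁ a₂, x = SA.mul a₁ a₂} ≤
      LinearMap.ker (f : A →ₗ[ℂ] ℂ) := by
    refine Submodule.span_le.2 ?_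
    rintro _ ⟨a₁, a₂, rfl⟩
    calc D (ι (SA.mul a₁ a₂)) z
        = D (ι a₂) (SP.mul z (ι a₁)) + D (ι a₁) (SP.mul (ι a₂) z) := by
          rw [hι]; exact congrArg (fun φ => φ z) (hD (ι a₁) (ι a₂))
      _ = 0 := by rw [hzι, hιz, map_zero, map_zero, add_zero]
  have hfc : Continuous[wstar ρA, inferInstance] f :=
    @Continuous.comp _ _ _ (wstar ρA) (wstar ρP) _ _ _
      (continuous_apply_of_mem_sigmaWC hDc hz) hιc
  exact congrFun (@Continuous.ext_on ℂ A _ (wstar ρA) _ _ hdense _ _ hfc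
    (@continuous_const A ℂ (wstar ρA) _ 0) fun x hx => hspan hx) a

def sigmaWCRestrict (π : P →L[ℂ] A)
    (hπ : ∀ z ∈ sigmaWC ρP SP.toBimodule, π z ∈ sigmaWC ρA SA.toBimodule) :
    ↥(sigmaWC ρP SP.toBimodule) →L[ℂ] ↥(sigmaWC ρA SA.toBimodule) :=
  (π.comp (sigmaWC ρP SP.toBimodule).subtypeL).codRestrict _ fun z => hπ z z.2

theorem dualL_sub_dualR_comp_sigmaWCRestrict (hA : IsDualBanachAlgebra ρA SA)
    (hP : IsDualBanachAlgebra ρP SP) {π : P →L[ℂ] A}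
    (hπ : ∀ u v, π (SP.mul u v) = SA.mul (π u) (π v))
    (hπσ : ∀ z ∈ sigmaWC ρP SP.toBimodule, π z ∈ sigmaWC ρA SA.toBimodule)
    (Φ : ↥(sigmaWC ρA SA.toBimodule) →L[ℂ] ℂ) (u : P) :
    dualL hP u (Φ.comp (sigmaWCRestrict π hπσ)) - dualR hP u (Φ.comp (sigmaWCRestrict π hπσ)) =
      (dualL hA (π u) Φ - dualR hA (π u) Φ).comp (sigmaWCRestrict π hπσ) := by
  ext z
  simp only [sub_apply, ContinuousLinearMap.comp_apply, dualL, dualR]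
  congr 1 <;> exact congrArg Φ (Subtype.ext (hπ _ _))

end Pullback

section L1Sum

variable {A X B Y : Type u} [NormedAddCommGroup A] [NormedSpace ℂ A]
  [NormedAddCommGroup X] [NormedSpace ℂ X] [NormedAddCommGroup B] [NormedSpace ℂ B]
  [NormedAddCommGroup Y] [NormedSpace ℂ Y]

/-- `(ρP, SP)` is the dual Banach algebra structure of `A ⊕¹ B` with predual `X ⊕^∞ Y`. -/
structure IsL1DirectSum (ρA : A ≃ₗᵢ[ℂ] (X →L[ℂ] ℂ)) (ρB : B ≃ₗᵢ[ℂ] (Y →L[ℂ] ℂ))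
    (ρP : WithLp 1 (A × B) ≃ₗᵢ[ℂ] ((X × Y) →L[ℂ] ℂ)) (SA : BanachAlgStr A)
    (SB : BanachAlgStr B) (SP : BanachAlgStr (WithLp 1 (A × B))) : Prop where
  duality : ∀ u q, ρP u q = ρA (prodL1 A B u).1 q.1 + ρB (prodL1 A B u).2 q.2
  mul : ∀ u v, prodL1 A B (SP.mul u v) =
    (SA.mul (prodL1 A B u).1 (prodL1 A B v).1, SB.mul (prodL1 A B u).2 (prodL1 A B v).2)

variable {ρA : A ≃ₗᵢ[ℂ] (X →L[ℂ] ℂ)} {ρB : B ≃ₗᵢ[ℂ] (Y →L[ℂ] ℂ)}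
  {ρP : WithLp 1 (A × B) ≃ₗᵢ[ℂ] ((X × Y) →L[ℂ] ℂ)}
  {SA : BanachAlgStr A} {SB : BanachAlgStr B} {SP : BanachAlgStr (WithLp 1 (A × B))}

variable (A B) in
def l1Fst : WithLp 1 (A × B) →L[ℂ] A :=
  (ContinuousLinearMap.fst ℂ A B).comp (prodL1 A B : WithLp 1 (A × B) →L[ℂ] A × B)

variable (A B) in
def l1Snd : WithLp 1 (A × B) →L[ℂ] B :=
  (ContinuousLinearMap.snd ℂ A B).comp (prodL1 A B : WithLp 1 (A × B) →L[ℂ] A × B)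

@[simp]
theorem l1Fst_iotaA (a : A) : l1Fst A B (iotaA A B a) = a := by
  simp [l1Fst, prodL1_iotaA]

@[simp]
theorem l1Snd_iotaB (b : B) : l1Snd A B (iotaB A B b) = b := by
  simp [l1Snd, prodL1_iotaB]

theorem iotaA_l1Fst_add_iotaB_l1Snd (u : WithLp 1 (A × B)) :
    iotaA A B (l1Fst A B u) + iotaB A B (l1Snd A B u) = u :=
  (prodL1 A B).injective <| by simp [l1Fst, l1Snd, prodL1_iotaA, prodL1_iotaB]

namespace IsL1DirectSum

theorem l1Fst_mul (h : IsL1DirectSum ρA ρB ρP SA SB SP) (u v : WithLp 1 (A × B)) :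
    l1Fst A B (SP.mul u v) = SA.mul (l1Fst A B u) (l1Fst A B v) :=
  congrArg Prod.fst (h.mul u v)

theorem l1Snd_mul (h : IsL1DirectSum ρA ρB ρP SA SB SP) (u v : WithLp 1 (A × B)) :
    l1Snd A B (SP.mul u v) = SB.mul (l1Snd A B u) (l1Snd A B v) :=
  congrArg Prod.snd (h.mul u v)

theorem iotaA_mul (h : IsL1DirectSum ρA ρB ρP SA SB SP) (a a' : A) :
    iotaA A B (SA.mul a a') = SP.mul (iotaA A B a) (iotaA A B a') :=
  (prodL1 A B).injective <| by simp [h.mul, prodL1_iotaA]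

theorem iotaB_mul (h : IsL1DirectSum ρA ρB ρP SA SB SP) (b b' : B) :
    iotaB A B (SB.mul b b') = SP.mul (iotaB A B b) (iotaB A B b') :=
  (prodL1 A B).injective <| by simp [h.mul, prodL1_iotaB]

theorem iotaA_mul_iotaB (h : IsL1DirectSum ρA ρB ρP SA SB SP) (a : A) (b : B) :
    SP.mul (iotaA A B a) (iotaB A B b) = 0 :=
  (prodL1 A B).injective <| by simp [h.mul, prodL1_iotaA, prodL1_iotaB]

theorem iotaB_mul_iotaA (h : IsL1DirectSum ρA ρB ρP SA SB SP) (b : B) (a : A) :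
    SP.mul (iotaB A B b) (iotaA A B a) = 0 :=
  (prodL1 A B).injective <| by simp [h.mul, prodL1_iotaA, prodL1_iotaB]

theorem continuous_iotaA (h : IsL1DirectSum ρA ρB ρP SA SB SP) :
    Continuous[wstar ρA, wstar ρP] (iotaA A B) := by
  refine continuous_topOfPairing_iff.2 fun q => ?_
  have hq : Continuous[wstar ρA, inferInstance] fun a => ρA a q.1 := topOfPairing_eval_cont _ _
  simpa [h.duality, prodL1_iotaA] using hq

theorem continuous_iotaB (h : IsL1DirectSum ρA ρB ρP SA SB SP) :
    Continuous[wstar ρB, wstar ρP] (iotaB A B) := by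
  refine continuous_topOfPairing_iff.2 fun q => ?_
  have hq : Continuous[wstar ρB, inferInstance] fun b => ρB b q.2 := topOfPairing_eval_cont _ _
  simpa [h.duality, prodL1_iotaB] using hq

theorem l1Fst_mem_sigmaWC (h : IsL1DirectSum ρA ρB ρP SA SB SP) :
    ∀ z ∈ sigmaWC ρP SP.toBimodule, l1Fst A B z ∈ sigmaWC ρA SA.toBimodule :=
  fun _ => mem_sigmaWC_of_leftInverse h.continuous_iotaA h.l1Fst_mul l1Fst_iotaA

theorem l1Snd_mem_sigmaWC (h : IsL1DirectSum ρA ρB ρP SA SB SP) :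
    ∀ z ∈ sigmaWC ρP SP.toBimodule, l1Snd A B z ∈ sigmaWC ρB SB.toBimodule :=
  fun _ => mem_sigmaWC_of_leftInverse h.continuous_iotaB h.l1Snd_mul l1Snd_iotaB

end IsL1DirectSum

theorem IsDerivationToDual.apply_eq_iotaA_add_iotaB (h : IsL1DirectSum ρA ρB ρP SA SB SP)
    {D : WithLp 1 (A × B) →L[ℂ] (WithLp 1 (A × B) →L[ℂ] ℂ)}
    (hD : IsDerivationToDual SP SP.toBimodule D)
    (hDc : Continuous[wstar ρP, wstarD ↥(sigmaWC ρP SP.toBimodule)]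
      fun u => jmap ρP SP.toBimodule (D u))
    (hdA : @Dense A (wstar ρA)
      (Submodule.span ℂ {x : A | ∃ a₁ a₂, x = SA.mul a₁ a₂} : Set A))
    (hdB : @Dense B (wstar ρB)
      (Submodule.span ℂ {y : B | ∃ b₁ b₂, y = SB.mul b₁ b₂} : Set B))
    (u : WithLp 1 (A × B)) {z : WithLp 1 (A × B)} (hz : z ∈ sigmaWC ρP SP.toBimodule) :
    D u z = D (iotaA A B (l1Fst A B u)) (iotaA A B (l1Fst A B z)) +
      D (iotaB A B (l1Snd A B u)) (iotaB A B (l1Snd A B z)) := by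
  have hAB : D (iotaA A B (l1Fst A B u)) (iotaB A B (l1Snd A B z)) = 0 :=
    hD.apply_eq_zero_of_mul_eq_zero hDc h.iotaA_mul h.continuous_iotaA hdA
      (iotaB_mem_sigmaWC ρA ρB SA SB ρP SP h.duality h.mul (h.l1Snd_mem_sigmaWC z hz))
      (fun _ => h.iotaA_mul_iotaB _ _) (fun _ => h.iotaB_mul_iotaA _ _) _
  have hBA : D (iotaB A B (l1Snd A B u)) (iotaA A B (l1Fst A B z)) = 0 :=
    hD.apply_eq_zero_of_mul_eq_zero hDc h.iotaB_mul h.continuous_iotaB hdB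
      (iotaA_mem_sigmaWC ρA ρB SA SB ρP SP h.duality h.mul (h.l1Fst_mem_sigmaWC z hz))
      (fun _ => h.iotaB_mul_iotaA _ _) (fun _ => h.iotaA_mul_iotaB _ _) _
  conv_lhs => rw [← iotaA_l1Fst_add_iotaB_l1Snd u, ← iotaA_l1Fst_add_iotaB_l1Snd z]
  simp only [map_add, add_apply, hAB, hBA, add_zero, zero_add]

end L1Sum

theorem directSum_weaklyConnesAmenable_general {A X B Y : Type u}
    [NormedAddCommGroup A] [NormedSpace ℂ A]
    [NormedAddCommGroup X] [NormedSpace ℂ X]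
    [NormedAddCommGroup B] [NormedSpace ℂ B]
    [NormedAddCommGroup Y] [NormedSpace ℂ Y]
    (ρA : A ≃ₗᵢ[ℂ] (X →L[ℂ] ℂ)) (ρB : B ≃ₗᵢ[ℂ] (Y →L[ℂ] ℂ))
    (SA : BanachAlgStr A) (SB : BanachAlgStr B)
    (hA : IsDualBanachAlgebra ρA SA) (hB : IsDualBanachAlgebra ρB SB)
    (ρP : WithLp 1 (A × B) ≃ₗᵢ[ℂ] ((X × Y) →L[ℂ] ℂ))
    (SP : BanachAlgStr (WithLp 1 (A × B)))
    (hρP : ∀ u q, ρP u q = ρA (prodL1 A B u).1 q.1 + ρB (prodL1 A B u).2 q.2)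
    (hSP : ∀ u v, prodL1 A B (SP.mul u v) =
      (SA.mul (prodL1 A B u).1 (prodL1 A B v).1,
       SB.mul (prodL1 A B u).2 (prodL1 A B v).2))
    (hP : IsDualBanachAlgebra ρP SP)
    (hWA : WeaklyConnesAmenable ρA SA hA) (hWB : WeaklyConnesAmenable ρB SB hB)
    (hdA : @Dense A (wstar ρA)
      (Submodule.span ℂ {x : A | ∃ a₁ a₂, x = SA.mul a₁ a₂} : Set A))
    (hdB : @Dense B (wstar ρB)
      (Submodule.span ℂ {y : B | ∃ b₁ b₂, y = SB.mul b₁ b₂} : Set B)) :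
    WeaklyConnesAmenable ρP SP hP := by
  intro D hD hDc
  have h : IsL1DirectSum ρA ρB ρP SA SB SP := ⟨hρP, hSP⟩
  obtain ⟨ΦA, hΦA⟩ := hWA _ (hD.pullback h.iotaA_mul)
    (continuous_jmap_derivPullback h.continuous_iotaA
      (fun _ => iotaA_mem_sigmaWC ρA ρB SA SB ρP SP hρP hSP) hDc)
  obtain ⟨ΦB, hΦB⟩ := hWB _ (hD.pullback h.iotaB_mul)
    (continuous_jmap_derivPullback h.continuous_iotaB
      (fun _ => iotaB_mem_sigmaWC ρA ρB SA SB ρP SP hρP hSP) hDc)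
  let πA := sigmaWCRestrict (l1Fst A B) h.l1Fst_mem_sigmaWC
  let πB := sigmaWCRestrict (l1Snd A B) h.l1Snd_mem_sigmaWC
  refine ⟨ΦA.comp πA + ΦB.comp πB, fun u => ?_⟩
  have hsplit : dualL hP u (ΦA.comp πA + ΦB.comp πB) - dualR hP u (ΦA.comp πA + ΦB.comp πB) =
      (dualL hP u (ΦA.comp πA) - dualR hP u (ΦA.comp πA)) +
        (dualL hP u (ΦB.comp πB) - dualR hP u (ΦB.comp πB)) := by
    simp only [dualL, dualR, ContinuousLinearMap.add_comp]
    abel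
  rw [hsplit, dualL_sub_dualR_comp_sigmaWCRestrict hA hP h.l1Fst_mul,
    dualL_sub_dualR_comp_sigmaWCRestrict hB hP h.l1Snd_mul, ← hΦA, ← hΦB]
  ext z
  exact hD.apply_eq_iotaA_add_iotaB h hDc hdA hdB u z.2

/-- **Theorem 3.10.** Let `𝔄` and `𝔅` be weakly Connes amenable dual Banach algebras such
that the linear spans of `𝔄² = (a₁a₂ : a₁, a₂ ∈ 𝔄)` and of `𝔅²` are w*-dense in `𝔄` and
`𝔅` respectively.  Then the ℓ¹-direct sum `𝔄 ⊕¹ 𝔅` is weakly Connes amenable.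
The ℓ¹-direct sum is realized as `WithLp 1 (A × B)`, with predual `X × Y` (sup norm) and
duality `ρP` and coordinatewise multiplication `SP` characterized by `hρP`, `hSP`. -/
theorem directSum_weaklyConnesAmenable {A X B Y : Type u}
    [NormedAddCommGroup A] [NormedSpace ℂ A] [CompleteSpace A]
    [NormedAddCommGroup X] [NormedSpace ℂ X] [CompleteSpace X]
    [NormedAddCommGroup B] [NormedSpace ℂ B] [CompleteSpace B]
    [NormedAddCommGroup Y] [NormedSpace ℂ Y] [CompleteSpace Y]
    (ρA : A ≃ₗᵢ[ℂ] (X →L[ℂ] ℂ)) (ρB : B ≃ₗᵢ[ℂ] (Y →L[ℂ] ℂ))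
    (SA : BanachAlgStr A) (SB : BanachAlgStr B)
    (hA : IsDualBanachAlgebra ρA SA) (hB : IsDualBanachAlgebra ρB SB)
    (ρP : WithLp 1 (A × B) ≃ₗᵢ[ℂ] ((X × Y) →L[ℂ] ℂ))
    (SP : BanachAlgStr (WithLp 1 (A × B)))
    (hρP : ∀ u q, ρP u q = ρA (prodL1 A B u).1 q.1 + ρB (prodL1 A B u).2 q.2)
    (hSP : ∀ u v, prodL1 A B (SP.mul u v) =
      (SA.mul (prodL1 A B u).1 (prodL1 A B v).1,
       SB.mul (prodL1 A B u).2 (prodL1 A B v).2))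
    (hP : IsDualBanachAlgebra ρP SP)
    (hWA : WeaklyConnesAmenable ρA SA hA) (hWB : WeaklyConnesAmenable ρB SB hB)
    (hdA : @Dense A (wstar ρA)
      (Submodule.span ℂ {x : A | ∃ a₁ a₂, x = SA.mul a₁ a₂} : Set A))
    (hdB : @Dense B (wstar ρB)
      (Submodule.span ℂ {y : B | ∃ b₁ b₂, y = SB.mul b₁ b₂} : Set B)) :
    WeaklyConnesAmenable ρP SP hP :=
  directSum_weaklyConnesAmenable_general ρA ρB SA SB hA hB ρP SP hρP hSP hP hWA hWB hdA hdB
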